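/- Let û ∈ U be the displacement with strain û'_ℓ = 1 for ℓ = −K−1, û'_ℓ = −1 for ℓ = K+2, and û'_ℓ = 0 otherwise. Then ⟨L^{qce} û, û⟩ = (A_F + (1/2)φ''_{2F}) ‖û'‖²_{ℓ²_ε}. In particular, if A_F + (1/2)φ''_{2F} < 0 then L^{qce} is indefinite. -/

import Mathlib

/-- The quadratic form of the QCE operator, via its decomposition. -/
noncomputable def Qqce (N K : ℕ) (ε φF φ2F : ℝ) (u : ℤ → ℝ) : ℝ :=
  let AF := φF + 4 * φ2F
  let du : ℤ → ℝ := fun ℓ => (u ℓ - u (ℓ - 1)) / ε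
  let ddu : ℤ → ℝ := fun ℓ => (u (ℓ + 1) - 2 * u ℓ + u (ℓ - 1)) / ε ^ 2
  (∑ ℓ ∈ Finset.Icc (-(N : ℤ) + 1) (-(K : ℤ) - 2), ε * AF * du ℓ ^ 2)
    + (∑ ℓ ∈ Finset.Icc ((K : ℤ) + 3) (N : ℤ), ε * AF * du ℓ ^ 2)
    + (∑ ℓ ∈ Finset.Icc (-(K : ℤ) + 2) ((K : ℤ) - 1),
        ε * (AF * du ℓ ^ 2 - ε ^ 2 * φ2F * ddu ℓ ^ 2))
    + ε * ((AF - φ2F) * (du (-(K : ℤ) + 1) ^ 2 + du (K : ℤ) ^ 2)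
        + AF * (du (-(K : ℤ)) ^ 2 + du ((K : ℤ) + 1) ^ 2)
        + (AF + φ2F) * (du (-(K : ℤ) - 1) ^ 2 + du ((K : ℤ) + 2) ^ 2)
        - ε ^ 2 / 2 * φ2F * (ddu (-(K : ℤ)) ^ 2 + ddu (-(K : ℤ) - 1) ^ 2
            + ddu (K : ℤ) ^ 2 + ddu ((K : ℤ) + 1) ^ 2))

/-! The second difference of `u` is the difference quotient of its strain `u'`, so a displacement
whose strain is supported on the two interface bonds `-K-1` and `K+2` sees only the interface
coefficients of `L^{qce}`: there `A_F + φ''_{2F}` from the first-order part and `-φ''_{2F}/2`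
from the second-order correction, giving `(A_F + φ''_{2F}/2) ‖u'‖²`. The test displacement `û`,
a plateau of height `ε` on `[-K-1, K+1]`, has strain `1` and `-1` on exactly these bonds. -/

noncomputable def strain (ε : ℝ) (u : ℤ → ℝ) (ℓ : ℤ) : ℝ :=
  (u ℓ - u (ℓ - 1)) / ε

lemma second_difference_div_sq (ε : ℝ) (u : ℤ → ℝ) (ℓ : ℤ) :
    (u (ℓ + 1) - 2 * u ℓ + u (ℓ - 1)) / ε ^ 2 = (strain ε u (ℓ + 1) - strain ε u ℓ) / ε := by
  rw [strain, strain, add_sub_cancel_right, div_sub_div_same, div_div, sq]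
  ring_nf

lemma strain_indicator_Icc {a b : ℤ} (hab : a ≤ b) (ε c : ℝ) (ℓ : ℤ) :
    strain ε ((Set.Icc a b).indicator fun _ => c) ℓ =
      if ℓ = a then c / ε else if ℓ = b + 1 then -c / ε else 0 := by
  simp only [strain, Set.indicator_apply, Set.mem_Icc]
  split_ifs <;> first | omega | ring

lemma Qqce_eq_of_strain_supported (N K : ℕ) (ε φF φ2F : ℝ) (u : ℤ → ℝ)
    (hu : ∀ ℓ : ℤ, ℓ ≠ -(K : ℤ) - 1 → ℓ ≠ (K : ℤ) + 2 → strain ε u ℓ = 0) :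
    Qqce N K ε φF φ2F u = ((φF + 4 * φ2F) + 1 / 2 * φ2F) *
      (ε * (strain ε u (-(K : ℤ) - 1) ^ 2 + strain ε u ((K : ℤ) + 2) ^ 2)) := by
  have hs : ∀ ℓ, (u ℓ - u (ℓ - 1)) / ε = strain ε u ℓ := fun _ => rfl
  simp only [Qqce, second_difference_div_sq, hs]
  have bulk_left : ∑ ℓ ∈ Finset.Icc (-(N : ℤ) + 1) (-(K : ℤ) - 2),
      ε * (φF + 4 * φ2F) * strain ε u ℓ ^ 2 = 0 :=
    Finset.sum_eq_zero fun ℓ hℓ => by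
      rw [Finset.mem_Icc] at hℓ
      rw [hu ℓ (by omega) (by omega)]; ring
  have bulk_right : ∑ ℓ ∈ Finset.Icc ((K : ℤ) + 3) (N : ℤ),
      ε * (φF + 4 * φ2F) * strain ε u ℓ ^ 2 = 0 :=
    Finset.sum_eq_zero fun ℓ hℓ => by
      rw [Finset.mem_Icc] at hℓ
      rw [hu ℓ (by omega) (by omega)]; ring
  have atomistic : ∑ ℓ ∈ Finset.Icc (-(K : ℤ) + 2) ((K : ℤ) - 1),
      ε * ((φF + 4 * φ2F) * strain ε u ℓ ^ 2
        - ε ^ 2 * φ2F * ((strain ε u (ℓ + 1) - strain ε u ℓ) / ε) ^ 2) = 0 :=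
    Finset.sum_eq_zero fun ℓ hℓ => by
      rw [Finset.mem_Icc] at hℓ
      rw [hu ℓ (by omega) (by omega), hu (ℓ + 1) (by omega) (by omega)]; ring
  rw [bulk_left, bulk_right, atomistic, show -(K : ℤ) - 1 + 1 = -K by ring,
    show (K : ℤ) + 1 + 1 = K + 2 by ring, hu (-K + 1) (by omega) (by omega),
    hu K (by omega) (by omega), hu (-K) (by omega) (by omega), hu (K + 1) (by omega) (by omega)]
  rcases eq_or_ne ε 0 with rfl | hε
  · simp
  · field_simp
    ring

theorem qce_indefinite_test_function
    (N K : ℕ) (hN : K + 2 ≤ N) (ε φF φ2F : ℝ) (hε : ε = 1 / N)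
    (u : ℤ → ℝ)
    (hu : ∀ ℓ : ℤ, u ℓ = if -(K : ℤ) - 1 ≤ ℓ ∧ ℓ ≤ (K : ℤ) + 1 then ε else 0) :
    Qqce N K ε φF φ2F u = ((φF + 4 * φ2F) + 1 / 2 * φ2F) * (2 * ε) ∧
    ((φF + 4 * φ2F) + 1 / 2 * φ2F < 0 → Qqce N K ε φF φ2F u < 0) := by
  have hε_pos : 0 < ε := by
    rw [hε]
    have : (0 : ℝ) < N := by exact_mod_cast (by omega : 0 < N)
    positivity
  have hu_plateau : u = (Set.Icc (-(K : ℤ) - 1) ((K : ℤ) + 1)).indicator fun _ => ε :=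
    funext fun ℓ => by simp only [hu, Set.indicator_apply, Set.mem_Icc]
  have hstrain := strain_indicator_Icc (by omega : -(K : ℤ) - 1 ≤ (K : ℤ) + 1) ε ε
  have hQ : Qqce N K ε φF φ2F u = ((φF + 4 * φ2F) + 1 / 2 * φ2F) * (2 * ε) := by
    rw [Qqce_eq_of_strain_supported N K ε φF φ2F u fun ℓ h₁ h₂ => by
      rw [hu_plateau, hstrain, if_neg h₁, if_neg (by omega)]]
    rw [hu_plateau, hstrain, hstrain, if_pos rfl, if_neg (by omega), if_pos (by ring),
      div_self hε_pos.ne', neg_div, div_self hε_pos.ne']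
    ring
  exact ⟨hQ, fun h => hQ ▸ mul_neg_of_neg_of_pos h (by positivity)⟩
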